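/- (Theorem 2, part (ii), discrete form.) Fix x ∈ 𝒳 and assume Assumption 2 holds, that P(X=x, T=t, R^X=1, R^T=1) > 0 for all t ∈ 𝒯, and that P(R^Y=1 | X=x, Y=y, R^X=1, R^T=1) > 0 for all y ∈ 𝒴 with P(X=x, Y=y, R^X=1, R^T=1) > 0. Then the following are equivalent: (a) Y ⫫ T | X=x, i.e., P(Y=y | X=x, T=t) does not depend on t ∈ 𝒯 for every y ∈ 𝒴; (b) the observed conditional P(Y=y, R^Y=1 | X=x, T=t, R^X=1, R^T=1) does not depend on t ∈ 𝒯 for every y ∈ 𝒴. In particular, when Y ⫫ T | X=x, the null conditional average treatment effect at x is identified from the observed data even though the completeness (full-rank) condition fails at x. -/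

import Mathlib

open scoped Classical
noncomputable section

namespace CATEMNAR

variable {Ω : Type*} [Fintype Ω]

/-- Probability of the event `E` under the pmf `p` on the finite space `Ω`. -/
def Pr (p : Ω → ℝ) (E : Ω → Prop) : ℝ := ∑ ω, if E ω then p ω else 0

/-- Conditional probability `P(E | C)` (junk value `0` when `P(C) = 0`). -/
def CPr (p : Ω → ℝ) (E C : Ω → Prop) : ℝ := Pr p (fun ω => E ω ∧ C ω) / Pr p C

/-- Conditional independence `A ⫫ B | C` under `p`: for all values `a, b, c` with
`P(C = c) > 0`, `P(A = a, B = b | C = c) = P(A = a | C = c) * P(B = b | C = c)`. -/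
def CondIndep {α β γ : Type*} (p : Ω → ℝ) (A : Ω → α) (B : Ω → β) (C : Ω → γ) : Prop :=
  ∀ (a : α) (b : β) (c : γ), 0 < Pr p (fun ω => C ω = c) →
    CPr p (fun ω => A ω = a ∧ B ω = b) (fun ω => C ω = c) =
      CPr p (fun ω => A ω = a) (fun ω => C ω = c) *
        CPr p (fun ω => B ω = b) (fun ω => C ω = c)

lemma Pr_congr (p : Ω → ℝ) {E E' : Ω → Prop} (h : ∀ ω, E ω ↔ E' ω) :
    Pr p E = Pr p E' :=
  Finset.sum_congr rfl fun ω _ => if_congr (h ω) rfl rfl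

lemma Pr_nonneg (p : Ω → ℝ) (hp0 : ∀ ω, 0 ≤ p ω) (E : Ω → Prop) : 0 ≤ Pr p E := by
  apply Finset.sum_nonneg
  intro ω _
  split_ifs
  · exact hp0 ω
  · exact le_rfl

lemma Pr_mono (p : Ω → ℝ) (hp0 : ∀ ω, 0 ≤ p ω) {E E' : Ω → Prop}
    (h : ∀ ω, E ω → E' ω) : Pr p E ≤ Pr p E' := by
  apply Finset.sum_le_sum
  intro ω _
  by_cases hE : E ω
  · rw [if_pos hE, if_pos (h ω hE)]
  · rw [if_neg hE]
    split_ifs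
    · exact hp0 ω
    · exact le_rfl

lemma CPr_nonneg (p : Ω → ℝ) (hp0 : ∀ ω, 0 ≤ p ω) (E C : Ω → Prop) :
    0 ≤ CPr p E C :=
  div_nonneg (Pr_nonneg p hp0 _) (Pr_nonneg p hp0 _)

/-- Theorem 2, part (ii), discrete form: under Assumption 2 and positivity, `Y ⫫ T | X=x`
(the full-data conditional outcome distribution does not depend on `t`) holds if and only if
the observed conditional `P(Y=y, R^Y=1 | X=x, T=t, R^X=1, R^T=1)` does not depend on `t`.
Hence the null CATE at `x` is identified from the observed data. -/
theorem stmt_7 {𝒳 𝒯 𝒴 : Type*} [Fintype 𝒳] [Fintype 𝒯] [Fintype 𝒴]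
    (p : Ω → ℝ) (hp0 : ∀ ω, 0 ≤ p ω) (hp1 : ∑ ω, p ω = 1)
    (X : Ω → 𝒳) (T : Ω → 𝒯) (Y : Ω → 𝒴) (RX RT RY : Ω → Bool)
    (hRX : CondIndep p RX Y (fun ω => (X ω, T ω)))
    (hRT : CondIndep p RT Y (fun ω => (X ω, T ω, RX ω)))
    (hRY : CondIndep p RY T (fun ω => (X ω, Y ω, RX ω, RT ω)))
    (x : 𝒳)
    (hpos : ∀ t : 𝒯,
      0 < Pr p (fun ω => X ω = x ∧ T ω = t ∧ RX ω = true ∧ RT ω = true))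
    (hres : ∀ y : 𝒴,
      0 < Pr p (fun ω => X ω = x ∧ Y ω = y ∧ RX ω = true ∧ RT ω = true) →
      0 < CPr p (fun ω => RY ω = true)
        (fun ω => X ω = x ∧ Y ω = y ∧ RX ω = true ∧ RT ω = true)) :
    (∀ (y : 𝒴) (t t' : 𝒯),
        CPr p (fun ω => Y ω = y) (fun ω => X ω = x ∧ T ω = t) =
          CPr p (fun ω => Y ω = y) (fun ω => X ω = x ∧ T ω = t')) ↔
      (∀ (y : 𝒴) (t t' : 𝒯),
        CPr p (fun ω => Y ω = y ∧ RY ω = true)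
            (fun ω => X ω = x ∧ T ω = t ∧ RX ω = true ∧ RT ω = true) =
          CPr p (fun ω => Y ω = y ∧ RY ω = true)
            (fun ω => X ω = x ∧ T ω = t' ∧ RX ω = true ∧ RT ω = true)) := by
  have hA : ∀ t, (0:ℝ) < Pr p (fun ω => X ω = x ∧ T ω = t) := by
    intro t
    refine lt_of_lt_of_le (hpos t) (Pr_mono p hp0 ?_)
    tauto
  have hB : ∀ t, (0:ℝ) < Pr p (fun ω => X ω = x ∧ T ω = t ∧ RX ω = true) := by
    intro t
    refine lt_of_lt_of_le (hpos t) (Pr_mono p hp0 ?_)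
    tauto
  -- key1 : P(X=x, T=t, RX, RT, Y=y) = P(Y=y | X=x, T=t) * P(X=x, T=t, RX, RT)
  have key1 : ∀ (y : 𝒴) (t : 𝒯),
      Pr p (fun ω => (X ω = x ∧ T ω = t ∧ RX ω = true ∧ RT ω = true) ∧ Y ω = y)
        = CPr p (fun ω => Y ω = y) (fun ω => X ω = x ∧ T ω = t) *
            Pr p (fun ω => X ω = x ∧ T ω = t ∧ RX ω = true ∧ RT ω = true) := by
    intro y t
    -- step 1 : use hRX
    have hC1 : (0:ℝ) < Pr p (fun ω => (X ω, T ω) = (x, t)) := by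
      rw [Pr_congr p (E' := fun ω => X ω = x ∧ T ω = t) (fun ω => by simp [Prod.ext_iff])]
      exact hA t
    have s1 := hRX true y (x, t) hC1
    unfold CPr at s1
    rw [Pr_congr p (E := fun ω => (X ω, T ω) = (x, t))
        (E' := fun ω => X ω = x ∧ T ω = t) (fun ω => by simp [Prod.ext_iff]),
      Pr_congr p (E := fun ω => (RX ω = true ∧ Y ω = y) ∧ (X ω, T ω) = (x, t))
        (E' := fun ω => (X ω = x ∧ T ω = t ∧ RX ω = true) ∧ Y ω = y)
        (fun ω => by simp [Prod.ext_iff]; tauto),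
      Pr_congr p (E := fun ω => RX ω = true ∧ (X ω, T ω) = (x, t))
        (E' := fun ω => X ω = x ∧ T ω = t ∧ RX ω = true)
        (fun ω => by simp [Prod.ext_iff]; tauto),
      Pr_congr p (E := fun ω => Y ω = y ∧ (X ω, T ω) = (x, t))
        (E' := fun ω => Y ω = y ∧ X ω = x ∧ T ω = t)
        (fun ω => by simp [Prod.ext_iff])] at s1
    -- step 2 : use hRT
    have hC2 : (0:ℝ) < Pr p (fun ω => (X ω, T ω, RX ω) = (x, t, true)) := by
      rw [Pr_congr p (E' := fun ω => X ω = x ∧ T ω = t ∧ RX ω = true)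
        (fun ω => by simp [Prod.ext_iff])]
      exact hB t
    have s2 := hRT true y (x, t, true) hC2
    unfold CPr at s2
    rw [Pr_congr p (E := fun ω => (X ω, T ω, RX ω) = (x, t, true))
        (E' := fun ω => X ω = x ∧ T ω = t ∧ RX ω = true)
        (fun ω => by simp [Prod.ext_iff]),
      Pr_congr p (E := fun ω => (RT ω = true ∧ Y ω = y) ∧ (X ω, T ω, RX ω) = (x, t, true))
        (E' := fun ω => (X ω = x ∧ T ω = t ∧ RX ω = true ∧ RT ω = true) ∧ Y ω = y)
        (fun ω => by simp [Prod.ext_iff]; tauto),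
      Pr_congr p (E := fun ω => RT ω = true ∧ (X ω, T ω, RX ω) = (x, t, true))
        (E' := fun ω => X ω = x ∧ T ω = t ∧ RX ω = true ∧ RT ω = true)
        (fun ω => by simp [Prod.ext_iff]; tauto),
      Pr_congr p (E := fun ω => Y ω = y ∧ (X ω, T ω, RX ω) = (x, t, true))
        (E' := fun ω => (X ω = x ∧ T ω = t ∧ RX ω = true) ∧ Y ω = y)
        (fun ω => by simp [Prod.ext_iff]; tauto)] at s2
    have hAne : Pr p (fun ω => X ω = x ∧ T ω = t) ≠ 0 := ne_of_gt (hA t)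
    have hBne : Pr p (fun ω => X ω = x ∧ T ω = t ∧ RX ω = true) ≠ 0 := ne_of_gt (hB t)
    field_simp at s1 s2
    have e1 : Pr p (fun ω => (X ω = x ∧ T ω = t ∧ RX ω = true) ∧ Y ω = y) *
        Pr p (fun ω => X ω = x ∧ T ω = t) =
        Pr p (fun ω => X ω = x ∧ T ω = t ∧ RX ω = true) *
        Pr p (fun ω => Y ω = y ∧ X ω = x ∧ T ω = t) := by
      apply mul_right_cancel₀ hAne
      linear_combination (Pr p (fun ω => X ω = x ∧ T ω = t)) * s1
    have e2 : Pr p (fun ω => (X ω = x ∧ T ω = t ∧ RX ω = true ∧ RT ω = true) ∧ Y ω = y) *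
        Pr p (fun ω => X ω = x ∧ T ω = t ∧ RX ω = true) =
        Pr p (fun ω => X ω = x ∧ T ω = t ∧ RX ω = true ∧ RT ω = true) *
        Pr p (fun ω => (X ω = x ∧ T ω = t ∧ RX ω = true) ∧ Y ω = y) := by
      apply mul_right_cancel₀ hBne
      linear_combination (Pr p (fun ω => X ω = x ∧ T ω = t ∧ RX ω = true)) * s2
    unfold CPr
    rw [div_mul_eq_mul_div, eq_div_iff hAne]
    apply mul_right_cancel₀ hBne
    linear_combination Pr p (fun ω => X ω = x ∧ T ω = t ∧ RX ω = true ∧ RT ω = true) * e1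
      + Pr p (fun ω => X ω = x ∧ T ω = t) * e2
  -- key2 : observed conditional factors as q(y,t) * r(y)
  have key2 : ∀ (y : 𝒴) (t : 𝒯),
      CPr p (fun ω => Y ω = y ∧ RY ω = true)
          (fun ω => X ω = x ∧ T ω = t ∧ RX ω = true ∧ RT ω = true) =
        CPr p (fun ω => Y ω = y) (fun ω => X ω = x ∧ T ω = t) *
          CPr p (fun ω => RY ω = true)
            (fun ω => X ω = x ∧ Y ω = y ∧ RX ω = true ∧ RT ω = true) := by
    intro y t
    have hDne : Pr p (fun ω => X ω = x ∧ T ω = t ∧ RX ω = true ∧ RT ω = true) ≠ 0 :=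
      ne_of_gt (hpos t)
    by_cases hMy : (0:ℝ) < Pr p (fun ω => X ω = x ∧ Y ω = y ∧ RX ω = true ∧ RT ω = true)
    · have hC3 : (0:ℝ) < Pr p (fun ω => (X ω, Y ω, RX ω, RT ω) = (x, y, true, true)) := by
        rw [Pr_congr p (E' := fun ω => X ω = x ∧ Y ω = y ∧ RX ω = true ∧ RT ω = true)
          (fun ω => by simp [Prod.ext_iff])]
        exact hMy
      have s3 := hRY true t (x, y, true, true) hC3
      unfold CPr at s3
      rw [Pr_congr p (E := fun ω => (X ω, Y ω, RX ω, RT ω) = (x, y, true, true))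
          (E' := fun ω => X ω = x ∧ Y ω = y ∧ RX ω = true ∧ RT ω = true)
          (fun ω => by simp [Prod.ext_iff]),
        Pr_congr p
          (E := fun ω => (RY ω = true ∧ T ω = t) ∧ (X ω, Y ω, RX ω, RT ω) = (x, y, true, true))
          (E' := fun ω => (Y ω = y ∧ RY ω = true) ∧
            (X ω = x ∧ T ω = t ∧ RX ω = true ∧ RT ω = true))
          (fun ω => by simp [Prod.ext_iff]; tauto),
        Pr_congr p
          (E := fun ω => RY ω = true ∧ (X ω, Y ω, RX ω, RT ω) = (x, y, true, true))
          (E' := fun ω => RY ω = true ∧ X ω = x ∧ Y ω = y ∧ RX ω = true ∧ RT ω = true)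
          (fun ω => by simp [Prod.ext_iff]),
        Pr_congr p
          (E := fun ω => T ω = t ∧ (X ω, Y ω, RX ω, RT ω) = (x, y, true, true))
          (E' := fun ω => (X ω = x ∧ T ω = t ∧ RX ω = true ∧ RT ω = true) ∧ Y ω = y)
          (fun ω => by simp [Prod.ext_iff]; tauto)] at s3
      have hMne : Pr p (fun ω => X ω = x ∧ Y ω = y ∧ RX ω = true ∧ RT ω = true) ≠ 0 :=
        ne_of_gt hMy
      field_simp at s3
      have e3 : Pr p (fun ω => (Y ω = y ∧ RY ω = true) ∧
            (X ω = x ∧ T ω = t ∧ RX ω = true ∧ RT ω = true)) *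
            Pr p (fun ω => X ω = x ∧ Y ω = y ∧ RX ω = true ∧ RT ω = true) =
          Pr p (fun ω => RY ω = true ∧ X ω = x ∧ Y ω = y ∧ RX ω = true ∧ RT ω = true) *
            Pr p (fun ω => (X ω = x ∧ T ω = t ∧ RX ω = true ∧ RT ω = true) ∧ Y ω = y) := by
        apply mul_right_cancel₀ hMne
        linear_combination (Pr p (fun ω => X ω = x ∧ Y ω = y ∧ RX ω = true ∧ RT ω = true)) * s3
      have hAne : Pr p (fun ω => X ω = x ∧ T ω = t) ≠ 0 := ne_of_gt (hA t)
      have key1m := key1 y t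
      unfold CPr at key1m
      rw [div_mul_eq_mul_div, eq_div_iff hAne] at key1m
      unfold CPr
      field_simp
      linear_combination (Pr p (fun ω => X ω = x ∧ T ω = t)) * e3 +
        (Pr p (fun ω => RY ω = true ∧ X ω = x ∧ Y ω = y ∧ RX ω = true ∧ RT ω = true)) * key1m
    · -- degenerate case : P(X=x, Y=y, RX, RT) = 0
      have hM0 : Pr p (fun ω => X ω = x ∧ Y ω = y ∧ RX ω = true ∧ RT ω = true) = 0 :=
        le_antisymm (not_lt.mp hMy) (Pr_nonneg p hp0 _)
      have hL0 : Pr p (fun ω => (Y ω = y ∧ RY ω = true) ∧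
          (X ω = x ∧ T ω = t ∧ RX ω = true ∧ RT ω = true)) = 0 := by
        refine le_antisymm ?_ (Pr_nonneg p hp0 _)
        rw [← hM0]
        exact Pr_mono p hp0 (by tauto)
      have hN0 : Pr p (fun ω => (X ω = x ∧ T ω = t ∧ RX ω = true ∧ RT ω = true) ∧ Y ω = y)
          = 0 := by
        refine le_antisymm ?_ (Pr_nonneg p hp0 _)
        rw [← hM0]
        exact Pr_mono p hp0 (by tauto)
      have hq0 : CPr p (fun ω => Y ω = y) (fun ω => X ω = x ∧ T ω = t) = 0 := by
        have := key1 y t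
        rw [hN0] at this
        rcases mul_eq_zero.mp this.symm with h | h
        · exact h
        · exact absurd h hDne
      rw [hq0, zero_mul]
      unfold CPr
      rw [hL0, zero_div]
  constructor
  · intro ha y t t'
    rw [key2 y t, key2 y t', ha y t t']
  · intro hb y t t'
    have hrpos : ∀ s : 𝒯,
        CPr p (fun ω => Y ω = y) (fun ω => X ω = x ∧ T ω = s) ≠ 0 →
        CPr p (fun ω => RY ω = true)
          (fun ω => X ω = x ∧ Y ω = y ∧ RX ω = true ∧ RT ω = true) ≠ 0 := by
      intro s hs
      have hqs : (0:ℝ) < CPr p (fun ω => Y ω = y) (fun ω => X ω = x ∧ T ω = s) :=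
        lt_of_le_of_ne (CPr_nonneg p hp0 _ _) (Ne.symm hs)
      have hN2 : (0:ℝ) <
          Pr p (fun ω => (X ω = x ∧ T ω = s ∧ RX ω = true ∧ RT ω = true) ∧ Y ω = y) := by
        rw [key1 y s]
        exact mul_pos hqs (hpos s)
      have hMy : (0:ℝ) < Pr p (fun ω => X ω = x ∧ Y ω = y ∧ RX ω = true ∧ RT ω = true) :=
        lt_of_lt_of_le hN2 (Pr_mono p hp0 (by tauto))
      exact ne_of_gt (hres y hMy)
    by_cases h1 : CPr p (fun ω => Y ω = y) (fun ω => X ω = x ∧ T ω = t) = 0 <;>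
      by_cases h2 : CPr p (fun ω => Y ω = y) (fun ω => X ω = x ∧ T ω = t') = 0
    · rw [h1, h2]
    · exact mul_right_cancel₀ (hrpos t' h2) (by rw [← key2 y t, ← key2 y t']; exact hb y t t')
    · exact mul_right_cancel₀ (hrpos t h1) (by rw [← key2 y t, ← key2 y t']; exact hb y t t')
    · exact mul_right_cancel₀ (hrpos t h1) (by rw [← key2 y t, ← key2 y t']; exact hb y t t')

end CATEMNAR
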